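/- arXiv:2006.05100 — 2 statements merged into one kernel-verified Lean document; each statement's English description precedes it below -/
import Mathlib

section
/- Let G be a finite group and H a non-trivial normal subgroup of G of even order. Then H is a total perfect code in some Cayley graph of G if and only if for every pair of integers a, b with 0 ≤ a ≤ |H| − 1 and 0 ≤ b ≤ |H|, H is an (a,b)-regular set in some Cayley graph of G. -/
/-- The Cayley graph of a group `G` with connection set `S`:
`x` is adjacent to `y` iff `y * x⁻¹ ∈ S` (symmetrized; for inverse-closed `S`
not containing `1` this is the usual Cayley graph). -/
def cayley {G : Type*} [Group G] (S : Set G) : SimpleGraph G :=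
  SimpleGraph.fromRel (fun x y => y * x⁻¹ ∈ S)

/-- `C` is an `(a,b)`-regular set in `Γ`: every vertex in `C` has exactly `a`
neighbors in `C`, and every vertex outside `C` has exactly `b` neighbors in `C`. -/
def IsRegularSet {V : Type*} (Γ : SimpleGraph V) (C : Set V) (a b : ℕ) : Prop :=
  (∀ v ∈ C, (Γ.neighborSet v ∩ C).ncard = a) ∧
  (∀ v ∉ C, (Γ.neighborSet v ∩ C).ncard = b)

/-
For inverse-closed `S` with `1 ∉ S`, the neighbours of `v` in `Cay(G, S)` form `S v`, so by
normality those lying in `H` correspond to `S ∩ v⁻¹H`: `H` is `(a, b)`-regular iff `S` meets `H`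
in `a` elements and every other coset in `b` elements. In particular a total perfect code `S₀`
meets every coset in exactly one element, which for a self-inverse coset `cH = c⁻¹H` is an
involution. That involution lets one pick inverse-closed subsets of `cH \ {1}` of every size
(odd sizes included); on a pair of cosets `cH ≠ c⁻¹H` pick any `b`-subset `T` of `cH` and put
`T⁻¹` into `c⁻¹H`. The union of these pieces is a connection set making `H` `(a, b)`-regular.
-/

namespace Set

variable {α : Type*} [InvolutiveInv α]

lemma sdiff_inv (s t : Set α) : (s \ t)⁻¹ = s⁻¹ \ t⁻¹ :=
  preimage_sdiff _ _ _

lemma inv_eq_self_of_forall_inv_eq {s : Set α} (hs : ∀ y ∈ s, y⁻¹ = y) : s⁻¹ = s := by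
  ext y
  refine ⟨fun hy => ?_, fun hy => by rwa [mem_inv, hs y hy]⟩
  rwa [← inv_inv y, hs y⁻¹ hy]

lemma exists_inv_eq_of_inv_eq_of_ncard_eq_one {s : Set α} (hs : s⁻¹ = s) (h1 : s.ncard = 1) :
    ∃ x ∈ s, x⁻¹ = x := by
  obtain ⟨x, rfl⟩ := ncard_eq_one.1 h1
  rw [inv_singleton, singleton_eq_singleton_iff] at hs
  exact ⟨x, rfl, hs⟩

lemma exists_subset_inv_eq_ncard_eq_two {s : Set α} (hs : s⁻¹ = s) (h2 : 2 ≤ s.ncard) :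
    ∃ t ⊆ s, t⁻¹ = t ∧ t.ncard = 2 := by
  by_cases hfix : ∀ y ∈ s, y⁻¹ = y
  · obtain ⟨t, hts, ht⟩ := exists_subset_card_eq h2
    exact ⟨t, hts, inv_eq_self_of_forall_inv_eq fun y hy => hfix y (hts hy), ht⟩
  · push Not at hfix
    obtain ⟨y, hy, hyy⟩ := hfix
    have hy' : y⁻¹ ∈ s := by rwa [← hs, mem_inv, inv_inv]
    refine ⟨{y, y⁻¹}, insert_subset hy (singleton_subset_iff.2 hy'), ?_, ncard_pair hyy.symm⟩
    rw [inv_insert, inv_singleton, inv_inv, pair_comm]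

/-- Adding inverse-closed pairs one at a time; the self-inverse `x` starts the odd sizes. -/
lemma exists_subset_inv_eq_ncard_eq {s : Set α} (hs : s⁻¹ = s) {x : α} (hx : x ∈ s)
    (hxx : x⁻¹ = x) {n : ℕ} (hn : n ≤ s.ncard) : ∃ t ⊆ s, t⁻¹ = t ∧ t.ncard = n := by
  induction n using Nat.twoStepInduction with
  | zero => exact ⟨∅, empty_subset s, inv_empty, ncard_empty α⟩
  | one => exact ⟨{x}, singleton_subset_iff.2 hx, by rw [inv_singleton, hxx], ncard_singleton x⟩
  | more n ih _ =>
    obtain ⟨t, hts, ht, rfl⟩ := ih (by omega)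
    have hfin : s.Finite := finite_of_ncard_pos (by omega)
    have hdiff : (s \ t)⁻¹ = s \ t := by
      rw [sdiff_inv, hs, ht]
    obtain ⟨p, hp, hpinv, hp2⟩ := exists_subset_inv_eq_ncard_eq_two hdiff
      (by rw [ncard_sdiff hts (hfin.subset hts)]; omega)
    refine ⟨t ∪ p, union_subset hts (hp.trans sdiff_subset), by rw [union_inv, ht, hpinv], ?_⟩
    rw [ncard_union_eq (disjoint_sdiff_right.mono_right hp) (hfin.subset hts)
      (hfin.subset (hp.trans sdiff_subset)), hp2]

end Set

/-- Take `t c` on the smaller of `c`, `c⁻¹` in a well-order of `ι`, and its inverse on the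
larger one. -/
lemma exists_forall_and_map_inv {ι β : Type*} [InvolutiveInv ι] [InvolutiveInv β]
    (P : ι → β → Prop) (h : ∀ c, ∃ t, P c t ∧ P c⁻¹ t⁻¹ ∧ (c⁻¹ = c → t⁻¹ = t)) :
    ∃ T : ι → β, ∀ c, P c (T c) ∧ T c⁻¹ = (T c)⁻¹ := by
  classical
  choose t hP hPinv hfix using h
  let : LinearOrder ι := linearOrderOfSTO WellOrderingRel
  refine ⟨fun c => if c ≤ c⁻¹ then t c else (t c⁻¹)⁻¹, fun c => ⟨?_, ?_⟩⟩
  · dsimp only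
    split_ifs
    · exact hP c
    · simpa using hPinv c⁻¹
  · simp only [inv_inv]
    split_ifs with h₁ h₂ h₂
    · have hc : c⁻¹ = c := le_antisymm h₁ h₂
      rw [hc, hfix c hc]
    · rw [inv_inv]
    · rfl
    · exact absurd (le_total c c⁻¹) (by tauto)

namespace QuotientGroup

variable {G : Type*} [Group G] {H : Subgroup G}

lemma ncard_preimage_mk_singleton (c : G ⧸ H) : (mk ⁻¹' {c} : Set G).ncard = Nat.card H := by
  rw [← Nat.card_coe_set_eq, card_preimage_mk, Nat.card_coe_set_eq, Set.ncard_singleton, mul_one]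

variable [H.Normal]

lemma inv_preimage_mk_singleton (c : G ⧸ H) : (mk ⁻¹' {c} : Set G)⁻¹ = mk ⁻¹' {c⁻¹} := by
  ext g
  simp [inv_eq_iff_eq_inv]

lemma preimage_mul_right_coe_subgroup (v : G) :
    (· * v) ⁻¹' (H : Set G) = mk ⁻¹' {(v : G ⧸ H)⁻¹} := by
  ext s
  simp only [Set.mem_preimage, SetLike.mem_coe, Set.mem_singleton_iff, ← eq_one_iff, mk_mul,
    mul_eq_one_iff_eq_inv]

end QuotientGroup

section Cayley

variable {G : Type*} [Group G] {S : Set G}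

lemma cayley_neighborSet (hS : S⁻¹ = S) (h1 : (1 : G) ∉ S) (v : G) :
    (cayley S).neighborSet v = (· * v) '' S := by
  ext y
  rw [Set.image_mul_right, Set.mem_preimage, SimpleGraph.mem_neighborSet, cayley,
    SimpleGraph.fromRel_adj]
  constructor
  · rintro ⟨-, h | h⟩
    · exact h
    · rw [← hS]
      simpa using h
  · refine fun h => ⟨?_, Or.inl h⟩
    rintro rfl
    exact h1 (by simpa using h)

lemma ncard_cayley_neighborSet_inter (hS : S⁻¹ = S) (h1 : (1 : G) ∉ S) (v : G) (C : Set G) :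
    ((cayley S).neighborSet v ∩ C).ncard = (S ∩ (· * v) ⁻¹' C).ncard := by
  rw [cayley_neighborSet hS h1, ← Set.image_inter_preimage,
    Set.ncard_image_of_injective _ (mul_left_injective v)]

variable {H : Subgroup G} [H.Normal]

open Classical in
theorem isRegularSet_cayley_subgroup_iff (hS : S⁻¹ = S) (h1 : (1 : G) ∉ S) {a b : ℕ} :
    IsRegularSet (cayley S) H a b ↔
      ∀ c : G ⧸ H, (S ∩ QuotientGroup.mk ⁻¹' {c}).ncard = if c = 1 then a else b := by
  have hcount (v : G) : ((cayley S).neighborSet v ∩ H).ncard =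
      (S ∩ QuotientGroup.mk ⁻¹' {(v : G ⧸ H)⁻¹}).ncard := by
    rw [ncard_cayley_neighborSet_inter hS h1, QuotientGroup.preimage_mul_right_coe_subgroup]
  have hmem (v : G) : (v : G ⧸ H)⁻¹ = 1 ↔ v ∈ H := by
    rw [inv_eq_one, QuotientGroup.eq_one_iff]
  constructor
  · rintro ⟨hin, hout⟩ c
    obtain ⟨v, hv⟩ := QuotientGroup.mk_surjective c⁻¹
    rw [← inv_inv c, ← hv, ← hcount]
    split_ifs with hvH <;> rw [hmem] at hvH
    · exact hin v hvH
    · exact hout v hvH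
  · intro h
    exact ⟨fun v hv => by rw [hcount, h, if_pos ((hmem v).2 hv)],
      fun v hv => by rw [hcount, h, if_neg (mt (hmem v).1 hv)]⟩

end Cayley

section CosetParts

open QuotientGroup

variable {G : Type*} [Group G] {H : Subgroup G} [H.Normal] {a b : ℕ}

variable (H a b) in
open Classical in
def IsCosetPart (c : G ⧸ H) (t : Set G) : Prop :=
  t ⊆ mk ⁻¹' {c} \ {1} ∧ t.ncard = if c = 1 then a else b

lemma inv_preimage_mk_singleton_sdiff_one (c : G ⧸ H) :
    (mk ⁻¹' {c} \ {1} : Set G)⁻¹ = mk ⁻¹' {c⁻¹} \ {1} := by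
  rw [Set.sdiff_inv, inv_preimage_mk_singleton, Set.inv_singleton, inv_one]

open Classical in
lemma le_ncard_preimage_mk_singleton_sdiff_one (ha : a ≤ Nat.card H - 1)
    (hb : b ≤ Nat.card H) (c : G ⧸ H) :
    (if c = 1 then a else b) ≤ (mk ⁻¹' {c} \ {1} : Set G).ncard := by
  split_ifs with hc
  · rwa [Set.ncard_sdiff_singleton_of_mem (by simp [hc]), ncard_preimage_mk_singleton]
  · rwa [Set.sdiff_singleton_eq_self (by simpa using Ne.symm hc), ncard_preimage_mk_singleton]

lemma exists_isCosetPart (ha : a ≤ Nat.card H - 1) (hb : b ≤ Nat.card H)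
    (hinvol : ∀ c : G ⧸ H, c⁻¹ = c → ∃ x ∈ mk ⁻¹' {c} \ {(1 : G)}, x⁻¹ = x) (c : G ⧸ H) :
    ∃ t, IsCosetPart H a b c t ∧ IsCosetPart H a b c⁻¹ t⁻¹ ∧ (c⁻¹ = c → t⁻¹ = t) := by
  have hle := le_ncard_preimage_mk_singleton_sdiff_one ha hb c
  by_cases hc : c⁻¹ = c
  · obtain ⟨x, hx, hxx⟩ := hinvol c hc
    obtain ⟨t, hts, ht, htc⟩ := Set.exists_subset_inv_eq_ncard_eq
      (by rw [inv_preimage_mk_singleton_sdiff_one, hc]) hx hxx hle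
    exact ⟨t, ⟨hts, htc⟩, by rw [hc, ht]; exact ⟨hts, htc⟩, fun _ => ht⟩
  · have hc1 : c ≠ 1 := by
      rintro rfl
      exact hc inv_one
    obtain ⟨t, hts, htc⟩ := Set.exists_subset_card_eq hle
    refine ⟨t, ⟨hts, htc⟩, ⟨?_, ?_⟩, fun h => absurd h hc⟩
    · rw [← inv_preimage_mk_singleton_sdiff_one]
      exact Set.inv_subset_inv.2 hts
    · rw [Set.ncard_inv, htc, if_neg hc1, if_neg (inv_ne_one.2 hc1)]

lemma exists_cayley_isRegularSet_of_isCosetPart (T : G ⧸ H → Set G)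
    (hT : ∀ c, IsCosetPart H a b c (T c)) (hTinv : ∀ c, T c⁻¹ = (T c)⁻¹) :
    ∃ S : Set G, S⁻¹ = S ∧ (1 : G) ∉ S ∧ IsRegularSet (cayley S) H a b := by
  have hinter (d : G ⧸ H) : (⋃ c, T c) ∩ mk ⁻¹' {d} = T d := by
    ext z
    simp only [Set.mem_inter_iff, Set.mem_iUnion, Set.mem_preimage, Set.mem_singleton_iff]
    constructor
    · rintro ⟨⟨c, hz⟩, rfl⟩
      obtain rfl : (z : G ⧸ H) = c := ((hT c).1 hz).1
      exact hz
    · exact fun hz => ⟨⟨d, hz⟩, ((hT d).1 hz).1⟩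
  have hinv : (⋃ c, T c)⁻¹ = ⋃ c, T c := by
    simp_rw [Set.iUnion_inv, ← hTinv]
    exact inv_surjective.iUnion_comp T
  have h1 : (1 : G) ∉ ⋃ c, T c := by
    simp only [Set.mem_iUnion, not_exists]
    exact fun c h => ((hT c).1 h).2 rfl
  refine ⟨⋃ c, T c, hinv, h1, (isRegularSet_cayley_subgroup_iff hinv h1).2 fun d => ?_⟩
  rw [hinter]
  exact (hT d).2

lemma exists_inv_eq_mem_preimage_mk_of_ncard_inter_eq_one {S : Set G} (hS : S⁻¹ = S)
    (h1 : (1 : G) ∉ S) (hcode : ∀ c : G ⧸ H, (S ∩ mk ⁻¹' {c}).ncard = 1) {c : G ⧸ H}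
    (hc : c⁻¹ = c) : ∃ x ∈ mk ⁻¹' {c} \ {(1 : G)}, x⁻¹ = x := by
  have hpart : (S ∩ mk ⁻¹' {c})⁻¹ = S ∩ mk ⁻¹' {c} := by
    rw [Set.inter_inv, hS, inv_preimage_mk_singleton, hc]
  obtain ⟨x, ⟨hxS, hxc⟩, hxx⟩ := Set.exists_inv_eq_of_inv_eq_of_ncard_eq_one hpart (hcode c)
  exact ⟨x, ⟨hxc, fun hx1 => h1 (hx1 ▸ hxS)⟩, hxx⟩

end CosetParts

theorem stmt6_general {G : Type*} [Group G] [Fintype G] (H : Subgroup G) [H.Normal]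
    (hnt : H ≠ ⊥) :
    (∃ S₀ : Set G, S₀⁻¹ = S₀ ∧ (1 : G) ∉ S₀ ∧
        IsRegularSet (cayley S₀) (H : Set G) 1 1) ↔
      (∀ a b : ℕ, a ≤ Nat.card H - 1 → b ≤ Nat.card H →
        ∃ S : Set G, S⁻¹ = S ∧ (1 : G) ∉ S ∧
          IsRegularSet (cayley S) (H : Set G) a b) := by
  constructor
  · rintro ⟨S₀, hS₀, h1, hcode⟩ a b ha hb
    rw [isRegularSet_cayley_subgroup_iff hS₀ h1] at hcode
    have hinvol (c : G ⧸ H) (hc : c⁻¹ = c) :=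
      exists_inv_eq_mem_preimage_mk_of_ncard_inter_eq_one hS₀ h1
        (fun c => (hcode c).trans (ite_self 1)) hc
    obtain ⟨T, hT⟩ := exists_forall_and_map_inv _ (exists_isCosetPart ha hb hinvol)
    exact exists_cayley_isRegularSet_of_isCosetPart T (fun c => (hT c).1) fun c => (hT c).2
  · intro h
    have hcard : 1 < Nat.card H := (Subgroup.one_lt_card_iff_ne_bot H).2 hnt
    exact h 1 1 (by omega) (by omega)

theorem stmt6 {G : Type*} [Group G] [Fintype G] (H : Subgroup G) [H.Normal]
    (hnt : H ≠ ⊥) (heven : Even (Nat.card H)) :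
    (∃ S₀ : Set G, S₀⁻¹ = S₀ ∧ (1 : G) ∉ S₀ ∧
        IsRegularSet (cayley S₀) (H : Set G) 1 1) ↔
      (∀ a b : ℕ, a ≤ Nat.card H - 1 → b ≤ Nat.card H →
        ∃ S : Set G, S⁻¹ = S ∧ (1 : G) ∉ S ∧
          IsRegularSet (cayley S) (H : Set G) a b) :=
  stmt6_general H hnt
end

section
/- Let Q₈ be the quaternion group of order 8 and H = ⟨i⟩ its cyclic subgroup of order 4. Then H is not a perfect code in any Cayley graph of Q₈; equivalently, there is no inverse-closed subset S of Q₈ \ {1} such that H is a (0,1)-regular set in Cay(Q₈,S). -/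
section Cayley

variable {G : Type*} [Group G] {S : Set G} {H : Subgroup G}

theorem cayley_adj_iff (hS : S⁻¹ = S) {x y : G} : (cayley S).Adj x y ↔ x ≠ y ∧ y * x⁻¹ ∈ S := by
  have hmem : x * y⁻¹ ∈ S ↔ y * x⁻¹ ∈ S := by
    rw [← Set.inv_mem_inv, hS, mul_inv_rev, inv_inv]
  simp only [cayley, SimpleGraph.fromRel_adj, hmem, or_self]

theorem exists_mem_notMem_of_isRegularSet {b : ℕ} (hS : S⁻¹ = S)
    (hreg : IsRegularSet (cayley S) H b 1) {g : G} (hg : g ∉ H) : ∃ s ∈ S, s ∉ H := by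
  obtain ⟨h, hh⟩ := Set.ncard_eq_one.mp (hreg.2 g hg)
  obtain ⟨hadj, hH⟩ : h ∈ (cayley S).neighborSet g ∩ (H : Set G) := hh ▸ rfl
  refine ⟨h * g⁻¹, ((cayley_adj_iff hS).mp hadj).2, fun hmem => hg ?_⟩
  simpa using H.mul_mem (H.inv_mem hmem) hH

theorem not_isRegularSet_of_mem_of_sq_mem {b : ℕ} (hS : S⁻¹ = S) {s : G} (hs : s ∈ S)
    (hsH : s ∉ H) (hsq : s ^ 2 ∈ H) (hsq_ne : s ^ 2 ≠ 1) : ¬ IsRegularSet (cayley S) H b 1 := by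
  intro hreg
  have hs_ne : s ≠ 1 := fun h => hsH (h ▸ H.one_mem)
  have h_one : (1 : G) ∈ (cayley S).neighborSet s ∩ (H : Set G) := by
    refine ⟨(cayley_adj_iff hS).mpr ⟨hs_ne, ?_⟩, H.one_mem⟩
    rw [one_mul, ← Set.mem_inv, hS]
    exact hs
  have h_sq : s ^ 2 ∈ (cayley S).neighborSet s ∩ (H : Set G) := by
    refine ⟨(cayley_adj_iff hS).mpr ⟨fun h => hs_ne ?_, ?_⟩, hsq⟩
    · simpa [sq] using h.symm
    · simpa [sq] using hs
  obtain ⟨w, hw⟩ := Set.ncard_eq_one.mp (hreg.2 s hsH)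
  rw [hw, Set.mem_singleton_iff] at h_one h_sq
  exact hsq_ne (h_sq.trans h_one.symm)

theorem not_isRegularSet_of_forall_sq {b : ℕ} (hS : S⁻¹ = S) {g : G} (hg : g ∉ H)
    (hsq : ∀ x ∉ H, x ^ 2 ∈ H ∧ x ^ 2 ≠ 1) : ¬ IsRegularSet (cayley S) H b 1 := by
  intro hreg
  obtain ⟨s, hs, hsH⟩ := exists_mem_notMem_of_isRegularSet hS hreg hg
  exact not_isRegularSet_of_mem_of_sq_mem hS hs hsH (hsq s hsH).1 (hsq s hsH).2 hreg

end Cayley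

namespace QuaternionGroup

variable {n : ℕ}

theorem a_one_zpow (k : ℤ) : (a 1 : QuaternionGroup n) ^ k = a k := by
  cases k with
  | ofNat m => simp
  | negSucc m =>
    rw [zpow_negSucc, a_one_pow, Int.cast_negSucc]
    rfl

theorem mem_zpowers_a_one_iff {g : QuaternionGroup n} :
    g ∈ Subgroup.zpowers (a 1) ↔ ∃ i, g = a i := by
  refine ⟨?_, ?_⟩
  · rintro ⟨k, rfl⟩
    exact ⟨k, a_one_zpow k⟩
  · rintro ⟨i, rfl⟩
    exact ⟨ZMod.cast i, (a_one_zpow _).trans (congrArg a (ZMod.intCast_zmod_cast i))⟩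

theorem xa_notMem_zpowers_a_one (i : ZMod (2 * n)) : xa i ∉ Subgroup.zpowers (a 1) := by
  simp [mem_zpowers_a_one_iff]

theorem a_n_ne_one [NeZero n] : (a n : QuaternionGroup n) ≠ 1 := by
  rw [one_def, Ne, a.injEq, ZMod.natCast_eq_zero_iff]
  intro h
  have := Nat.le_of_dvd (Nat.pos_of_neZero n) h
  have := NeZero.ne n
  omega

theorem sq_mem_zpowers_a_one_of_notMem [NeZero n] {g : QuaternionGroup n}
    (hg : g ∉ Subgroup.zpowers (a 1)) : g ^ 2 ∈ Subgroup.zpowers (a 1) ∧ g ^ 2 ≠ 1 := by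
  cases g with
  | a i => exact absurd (mem_zpowers_a_one_iff.mpr ⟨i, rfl⟩) hg
  | xa i => exact ⟨xa_sq i ▸ mem_zpowers_a_one_iff.mpr ⟨n, rfl⟩, xa_sq i ▸ a_n_ne_one⟩

theorem not_isRegularSet_zpowers_a_one [NeZero n] {S : Set (QuaternionGroup n)} (hS : S⁻¹ = S)
    (b : ℕ) : ¬ IsRegularSet (cayley S)
      (Subgroup.zpowers (a 1 : QuaternionGroup n) : Set (QuaternionGroup n)) b 1 :=
  not_isRegularSet_of_forall_sq hS (xa_notMem_zpowers_a_one 0)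
    fun _ => sq_mem_zpowers_a_one_of_notMem

end QuaternionGroup

open QuaternionGroup in
theorem stmt16 :
    ¬ ∃ S : Set (QuaternionGroup 2), S⁻¹ = S ∧ (1 : QuaternionGroup 2) ∉ S ∧
      IsRegularSet (cayley S)
        (Subgroup.zpowers (a 1 : QuaternionGroup 2) : Set (QuaternionGroup 2)) 0 1 := by
  rintro ⟨S, hS, -, hreg⟩
  exact not_isRegularSet_zpowers_a_one hS 0 hreg
end
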